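/- Let (M,g) be a hypersurface of (n+1)-dimensional Euclidean space with second fundamental form B and Riemann curvature tensor R (viewed as a (2,2)-double form). Then B^{2k} = 2^k R^k for every k, and consequently the even elementary symmetric functions of the principal curvatures are intrinsic: s_{2k} = (2^k/((2k)!)²) c^{2k}(R^k). -/

import Mathlib

open Finset

noncomputable section

abbrev E (n : ℕ) := EuclideanSpace ℝ (Fin n)

/-- `(p,q)`-double forms on `ℝⁿ` (modeled as real-valued functions of a `p`-tuple
and a `q`-tuple of vectors; genuine double forms are singled out by `DF.IsDF`). -/
abbrev DF (n p q : ℕ) := (Fin p → E n) → (Fin q → E n) → ℝ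

namespace DF

/-- the standard orthonormal basis of `ℝⁿ` -/
def e (n : ℕ) (i : Fin n) : E n := EuclideanSpace.single i 1

/-- cast a double form along equalities of bidegrees -/
def cDF {n p q p' q' : ℕ} (hp : p = p') (hq : q = q') (ω : DF n p q) : DF n p' q' :=
  fun x y => ω (fun i => x (Fin.cast hp i)) (fun j => y (Fin.cast hq j))

/-- the exterior product of double forms (extending the Kulkarni–Nomizu product) -/
def mul {n p q p' q' : ℕ} (ω : DF n p q) (θ : DF n p' q') : DF n (p + p') (q + q') :=
  fun x y =>
    ((p.factorial * p'.factorial * q.factorial * q'.factorial : ℕ) : ℝ)⁻¹ *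
      ∑ σ : Equiv.Perm (Fin (p + p')), ∑ τ : Equiv.Perm (Fin (q + q')),
        ((Equiv.Perm.sign σ : ℤ) : ℝ) * ((Equiv.Perm.sign τ : ℤ) : ℝ) *
          (ω (fun i => x (σ (Fin.castAdd p' i))) (fun j => y (τ (Fin.castAdd q' j))) *
           θ (fun i => x (σ (Fin.natAdd p i))) (fun j => y (τ (Fin.natAdd q j))))

/-- the bilinear form of the metric, as a `(1,1)`-double form -/
def gDF (n : ℕ) : DF n 1 1 := fun x y => @inner ℝ _ _ (x 0) (y 0)

/-- a bilinear form as a `(1,1)`-double form -/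
def ofBilin {n : ℕ} (B : E n →ₗ[ℝ] E n →ₗ[ℝ] ℝ) : DF n 1 1 := fun x y => B (x 0) (y 0)

/-- the `k`-th exterior power `B^k` of a `(1,1)`-double form -/
def pow1 {n : ℕ} (B : DF n 1 1) : (k : ℕ) → DF n k k
  | 0 => fun _ _ => 1
  | (k + 1) => cDF (Nat.add_comm 1 k) (Nat.add_comm 1 k) (mul B (pow1 B k))

/-- the `k`-th exterior power `R^k` of a `(2,2)`-double form -/
def pow2 {n : ℕ} (R : DF n 2 2) : (k : ℕ) → DF n (2 * k) (2 * k)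
  | 0 => fun _ _ => 1
  | (k + 1) => cDF (by omega) (by omega) (mul R (pow2 R k))

/-- the `m`-fold contraction `c^m ω` -/
def contr {n : ℕ} (m p q : ℕ) (ω : DF n (m + p) (m + q)) : DF n p q :=
  fun x y => ∑ I : Fin m → Fin n,
    ω (Fin.append (fun i => e n (I i)) x) (Fin.append (fun i => e n (I i)) y)

/-- the scalar value of a `(0,0)`-double form -/
def scal {n : ℕ} (ω : DF n 0 0) : ℝ := ω (fun i => i.elim0) (fun i => i.elim0)

/-- the natural inner product of two `(p,q)`-double forms -/
def innerDF {n p q : ℕ} (ω θ : DF n p q) : ℝ :=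
  ((p.factorial * q.factorial : ℕ) : ℝ)⁻¹ *
    ∑ I : Fin p → Fin n, ∑ J : Fin q → Fin n,
      ω (fun i => e n (I i)) (fun j => e n (J j)) *
        θ (fun i => e n (I i)) (fun j => e n (J j))

open Classical in
/-- the sign of the concatenation of two index tuples, as a permutation of `Fin n`
(zero if it is not a permutation) -/
def epsSgn {n a b : ℕ} (I : Fin a → Fin n) (K : Fin b → Fin n) : ℝ :=
  if h : a + b = n then
    if hb : Function.Bijective (fun i => Fin.append I K (Fin.cast h.symm i)) then
      ((Equiv.Perm.sign (Equiv.ofBijective _ hb) : ℤ) : ℝ)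
    else 0
  else 0

/-- the generalized Hodge star operator on double forms,
`(*ω)(·,·) = (−1)^{(p+q)(n−p−q)} ω(*·,*·)` -/
def star {n p q : ℕ} (ω : DF n p q) : DF n (n - p) (n - q) :=
  fun x y =>
    ((-1 : ℝ) ^ (((p + q : ℕ) : ℤ) * ((n : ℤ) - (p : ℤ) - (q : ℤ)))) *
      (((p.factorial * q.factorial : ℕ) : ℝ)⁻¹ *
        ∑ I : Fin (n - p) → Fin n, ∑ J : Fin (n - q) → Fin n,
          (∏ i, @inner ℝ _ _ (e n (I i)) (x i)) * (∏ j, @inner ℝ _ _ (e n (J j)) (y j)) *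
            ∑ K : Fin p → Fin n, ∑ L : Fin q → Fin n,
              epsSgn I K * epsSgn J L * ω (fun i => e n (K i)) (fun j => e n (L j)))

/-- a function of a `p`-tuple of vectors is an (alternating multilinear) `p`-form -/
def IsAlt {n p : ℕ} (f : (Fin p → E n) → ℝ) : Prop :=
  ∃ A : AlternatingMap ℝ (E n) ℝ (Fin p), ∀ x, A x = f x

/-- `ω` is a genuine double form: alternating multilinear in each block of arguments -/
def IsDF {n p q : ℕ} (ω : DF n p q) : Prop :=
  (∀ y, IsAlt fun x => ω x y) ∧ (∀ x, IsAlt fun y => ω x y)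

/-- the first Bianchi identity for a `(p+1,p+1)`-double form -/
def FirstBianchi {n p : ℕ} (ω : DF n (p + 1) (p + 1)) : Prop :=
  ∀ (x : Fin (p + 2) → E n) (y : Fin p → E n),
    ∑ i : Fin (p + 2), ((-1 : ℝ) ^ (i : ℕ)) *
      ω (fun j => x (i.succAbove j)) (Fin.cons (x i) y) = 0

/-- the `k`-th elementary symmetric function of `μ₁, …, μₙ` -/
def esymm (n k : ℕ) (μ : Fin n → ℝ) : ℝ :=
  ∑ s ∈ Finset.powersetCard k (Finset.univ : Finset (Fin n)), ∏ i ∈ s, μ i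

end DF

/-!
The exterior powers of a bilinear form are determinants: `B^m = m! · D_m` with
`D_m(x, y) = det (B(xᵢ, yⱼ))`, because the exterior product of `D_a` and `D_m` is
`(a+m)!/(a! m!) · D_{a+m}` (a Laplace expansion along the first `a` rows). The Gauss equation then
reads `R = D₂`, whence `R^k = (2k)!/2^k · D_{2k}` and `B^{2k} = 2^k R^k`.

The full contraction of a double form is the same in every orthonormal basis. In an eigenbasis of
`B` the matrix `(B(e_{Iᵢ}, e_{Iⱼ}))` is diagonal when `I` is injective and has two equal rows
otherwise, so `c^m D_m = ∑_{I injective} ∏ μ_{Iⱼ} = m! s_m`.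
-/

theorem card_filter_injective_image_eq {ι : Type*} [Fintype ι] [DecidableEq ι] {m : ℕ}
    {s : Finset ι} (hs : s.card = m) :
    #{A : Fin m → ι | Function.Injective A ∧ univ.image A = s} = m.factorial := by
  have hmem : ∀ A : Fin m → ι, univ.image A = s → ∀ j, A j ∈ s := fun A hA j =>
    hA ▸ mem_image_of_mem A (mem_univ j)
  let e : {A : Fin m → ι // Function.Injective A ∧ univ.image A = s} ≃ (Fin m ≃ s) :=
    { toFun := fun A => Equiv.ofBijective (fun j => ⟨A.1 j, hmem A.1 A.2.2 j⟩)
        ⟨fun j j' h => A.2.1 (congrArg Subtype.val h), fun i => by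
          obtain ⟨j, -, hj⟩ := mem_image.mp (A.2.2.symm ▸ i.2 : (i : ι) ∈ univ.image A.1)
          exact ⟨j, Subtype.ext hj⟩⟩
      invFun := fun f => ⟨fun j => f j, Subtype.val_injective.comp f.injective, by
        ext i
        simp only [mem_image, mem_univ, true_and]
        exact ⟨fun ⟨j, hj⟩ => hj ▸ (f j).2, fun hi => ⟨f.symm ⟨i, hi⟩, by simp⟩⟩⟩
      left_inv := fun A => rfl
      right_inv := fun f => by ext; rfl }
  rw [← Fintype.card_subtype, Fintype.card_congr e,
    Fintype.card_equiv (finCongr hs.symm |>.trans s.equivFin.symm), Fintype.card_fin]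

theorem sum_filter_injective_prod {ι R : Type*} [Fintype ι] [DecidableEq ι] [CommSemiring R]
    (m : ℕ) (μ : ι → R) :
    ∑ A : Fin m → ι with Function.Injective A, ∏ j, μ (A j) =
      m.factorial * ∑ s ∈ powersetCard m univ, ∏ i ∈ s, μ i := by
  rw [mul_sum, ← sum_fiberwise_of_maps_to (g := fun A => univ.image A)
    (t := powersetCard m univ) fun A hA => by
      rw [mem_powersetCard_univ, card_image_of_injective _ (mem_filter.mp hA).2, card_fin]]
  refine sum_congr rfl fun s hs => ?_
  rw [sum_congr rfl (g := fun _ => ∏ i ∈ s, μ i), sum_const, filter_filter,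
    card_filter_injective_image_eq (mem_powersetCard_univ.mp hs), nsmul_eq_mul]
  intro A hA
  obtain ⟨hinj, rfl⟩ := mem_filter.mp hA
  rw [prod_image fun j _ j' _ h => (mem_filter.mp hinj).2 h]

theorem OrthonormalBasis.sum_prod_inner_mul_inner {ι κ V : Type*} [Fintype ι] [Fintype κ]
    [DecidableEq κ] [NormedAddCommGroup V] [InnerProductSpace ℝ V] {p : ℕ}
    (b : OrthonormalBasis ι ℝ V) (b' : OrthonormalBasis κ ℝ V) (A A' : Fin p → κ) :
    ∑ I : Fin p → ι, ∏ j, inner ℝ (b' (A j)) (b (I j)) * inner ℝ (b' (A' j)) (b (I j)) =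
      if A = A' then 1 else 0 := by
  have horth : ∀ a a', ∑ i, inner ℝ (b' a) (b i) * inner ℝ (b' a') (b i) =
      if a = a' then 1 else 0 := by
    intro a a'
    simp_rw [← real_inner_comm (b' a'), b.sum_inner_mul_inner,
      orthonormal_iff_ite.mp b'.orthonormal]
  rw [← Fintype.prod_sum fun j i => inner ℝ (b' (A j)) (b i) * inner ℝ (b' (A' j)) (b i)]
  simp only [horth, Finset.prod_boole]
  simp [funext_iff]

namespace Equiv.Perm

def finSumCongr {a m : ℕ} (α : Perm (Fin a)) (π : Perm (Fin m)) : Perm (Fin (a + m)) :=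
  finSumFinEquiv.permCongr (α.sumCongr π)

@[simp]
theorem finSumCongr_castAdd {a m : ℕ} (α : Perm (Fin a)) (π : Perm (Fin m)) (i : Fin a) :
    finSumCongr α π (Fin.castAdd m i) = Fin.castAdd m (α i) := by
  simp [finSumCongr, permCongr_apply]

@[simp]
theorem finSumCongr_natAdd {a m : ℕ} (α : Perm (Fin a)) (π : Perm (Fin m)) (i : Fin m) :
    finSumCongr α π (Fin.natAdd a i) = Fin.natAdd a (π i) := by
  simp [finSumCongr, permCongr_apply]

@[simp]
theorem sign_finSumCongr {a m : ℕ} (α : Perm (Fin a)) (π : Perm (Fin m)) :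
    sign (finSumCongr α π) = sign α * sign π := by
  simp [finSumCongr, sign_permCongr, sign_sumCongr]

end Equiv.Perm

namespace DF

open Equiv

variable {n : ℕ}

def detDF (B : E n →ₗ[ℝ] E n →ₗ[ℝ] ℝ) (m : ℕ) : DF n m m :=
  fun x y => (Matrix.of fun i j => B (x i) (y j)).det

theorem detDF_eq_sum (B : E n →ₗ[ℝ] E n →ₗ[ℝ] ℝ) {m : ℕ} (x y : Fin m → E n) :
    detDF B m x y = ∑ τ : Perm (Fin m), ((Perm.sign τ : ℤ) : ℝ) * ∏ j, B (x j) (y (τ j)) := by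
  rw [detDF, ← Matrix.det_transpose, Matrix.det_apply']
  rfl

theorem sum_sign_mul_prod_comp_perm (B : E n →ₗ[ℝ] E n →ₗ[ℝ] ℝ) {m : ℕ} (x y : Fin m → E n)
    (σ : Perm (Fin m)) :
    ∑ τ : Perm (Fin m), ((Perm.sign τ : ℤ) : ℝ) * ∏ j, B (x (σ j)) (y (τ j)) =
      (Perm.sign σ : ℤ) * detDF B m x y := by
  rw [← detDF_eq_sum, detDF, detDF, ← Matrix.det_permute]
  rfl

theorem detDF_castAdd_mul_detDF_natAdd (B : E n →ₗ[ℝ] E n →ₗ[ℝ] ℝ) {a m : ℕ}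
    (u v : Fin (a + m) → E n) :
    detDF B a (fun i => u (Fin.castAdd m i)) (fun i => v (Fin.castAdd m i)) *
        detDF B m (fun i => u (Fin.natAdd a i)) (fun i => v (Fin.natAdd a i)) =
      ∑ α : Perm (Fin a), ∑ π : Perm (Fin m), ((Perm.sign (α.finSumCongr π) : ℤ) : ℝ) *
        ∏ j, B (u j) (v (α.finSumCongr π j)) := by
  rw [detDF_eq_sum, detDF_eq_sum, Finset.sum_mul_sum]
  refine Finset.sum_congr rfl fun α _ => Finset.sum_congr rfl fun π _ => ?_
  rw [Fin.prod_univ_add]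
  simp only [Perm.finSumCongr_castAdd, Perm.finSumCongr_natAdd, Perm.sign_finSumCongr,
    Units.val_mul, Int.cast_mul]
  ring

theorem sum_sign_mul_detDF_mul_detDF (B : E n →ₗ[ℝ] E n →ₗ[ℝ] ℝ) {a m : ℕ}
    (x y : Fin (a + m) → E n) (σ : Perm (Fin (a + m))) :
    ∑ τ : Perm (Fin (a + m)), ((Perm.sign τ : ℤ) : ℝ) *
        (detDF B a (fun i => x (σ (Fin.castAdd m i))) (fun i => y (τ (Fin.castAdd m i))) *
          detDF B m (fun i => x (σ (Fin.natAdd a i))) (fun i => y (τ (Fin.natAdd a i)))) =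
      a.factorial * m.factorial * ((Perm.sign σ : ℤ) * detDF B (a + m) x y) := by
  have hblock := fun τ : Perm (Fin (a + m)) =>
    detDF_castAdd_mul_detDF_natAdd B (fun j => x (σ j)) (fun j => y (τ j))
  beta_reduce at hblock
  have hreindex : ∀ ρ : Perm (Fin (a + m)),
      ∑ τ : Perm (Fin (a + m)), ((Perm.sign τ : ℤ) : ℝ) *
          (((Perm.sign ρ : ℤ) : ℝ) * ∏ j, B (x (σ j)) (y (τ (ρ j)))) =
        ∑ τ : Perm (Fin (a + m)), ((Perm.sign τ : ℤ) : ℝ) * ∏ j, B (x (σ j)) (y (τ j)) := by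
    intro ρ
    rw [← Equiv.sum_comp (Equiv.mulRight ρ)
      (fun τ => ((Perm.sign τ : ℤ) : ℝ) * ∏ j, B (x (σ j)) (y (τ j)))]
    refine Finset.sum_congr rfl fun τ _ => ?_
    simp only [coe_mulRight, Perm.sign_mul, Units.val_mul, Int.cast_mul, Perm.coe_mul,
      Function.comp_apply]
    ring
  simp only [hblock, Finset.mul_sum]
  rw [Finset.sum_comm]
  simp only [Finset.sum_comm (γ := Perm (Fin (a + m))) (α := Perm (Fin m)), hreindex,
    Finset.sum_const, Finset.card_univ, Fintype.card_perm, Fintype.card_fin, nsmul_eq_mul,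
    sum_sign_mul_prod_comp_perm]
  ring

theorem mul_detDF (B : E n →ₗ[ℝ] E n →ₗ[ℝ] ℝ) (a m : ℕ) :
    mul (detDF B a) (detDF B m) =
      ((a + m).factorial / (a.factorial * m.factorial) : ℝ) • detDF B (a + m) := by
  funext x y
  have hsign : ∀ σ : Perm (Fin (a + m)), ((Perm.sign σ : ℤ) : ℝ) *
      (a.factorial * (m.factorial * ((Perm.sign σ : ℤ) * detDF B (a + m) x y))) =
        a.factorial * m.factorial * detDF B (a + m) x y := by
    intro σ
    have : ((Perm.sign σ : ℤ) : ℝ) * (Perm.sign σ : ℤ) = 1 := by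
      rw [← Int.cast_mul, ← Units.val_mul, Int.units_mul_self, Units.val_one, Int.cast_one]
    linear_combination (a.factorial * m.factorial * detDF B (a + m) x y) * this
  simp only [mul, mul_assoc, ← Finset.mul_sum, sum_sign_mul_detDF_mul_detDF, hsign,
    Finset.sum_const, Finset.card_univ, Fintype.card_perm, Fintype.card_fin, nsmul_eq_mul,
    Pi.smul_apply, smul_eq_mul]
  push_cast
  field_simp

theorem mul_smul_smul {p q p' q' : ℕ} (c d : ℝ) (ω : DF n p q) (θ : DF n p' q') :
    mul (c • ω) (d • θ) = (c * d) • mul ω θ := by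
  funext x y
  simp only [mul, Pi.smul_apply, smul_eq_mul, Finset.mul_sum]
  refine Finset.sum_congr rfl fun σ _ => Finset.sum_congr rfl fun τ _ => ?_
  ring

theorem cDF_smul {p q p' q' : ℕ} (hp : p = p') (hq : q = q') (c : ℝ) (ω : DF n p q) :
    cDF hp hq (c • ω) = c • cDF hp hq ω :=
  rfl

theorem cDF_detDF (B : E n →ₗ[ℝ] E n →ₗ[ℝ] ℝ) {m m' : ℕ} (h : m = m') :
    cDF h h (detDF B m) = detDF B m' := by
  subst h
  rfl

theorem ofBilin_eq_detDF (B : E n →ₗ[ℝ] E n →ₗ[ℝ] ℝ) : ofBilin B = detDF B 1 := by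
  funext x y
  simp [ofBilin, detDF]

theorem pow1_ofBilin (B : E n →ₗ[ℝ] E n →ₗ[ℝ] ℝ) (m : ℕ) :
    pow1 (ofBilin B) m = (m.factorial : ℝ) • detDF B m := by
  induction m with
  | zero => funext x y; simp [pow1, detDF]
  | succ k ih =>
    rw [pow1, ih, ofBilin_eq_detDF, ← one_smul ℝ (detDF B 1), mul_smul_smul, mul_detDF,
      smul_smul, cDF_smul, cDF_detDF]
    congr 1
    rw [add_comm 1 k, Nat.factorial_succ, Nat.factorial_one]
    push_cast
    field_simp

theorem pow2_detDF (B : E n →ₗ[ℝ] E n →ₗ[ℝ] ℝ) (k : ℕ) :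
    pow2 (detDF B 2) k = ((2 * k).factorial / 2 ^ k : ℝ) • detDF B (2 * k) := by
  induction k with
  | zero => funext x y; simp [pow2, detDF]
  | succ k ih =>
    rw [pow2, ih, ← one_smul ℝ (detDF B 2), mul_smul_smul, mul_detDF, smul_smul, cDF_smul,
      cDF_detDF]
    congr 1
    rw [show 2 + 2 * k = 2 * k + 1 + 1 by ring, show 2 * (k + 1) = 2 * k + 1 + 1 by ring,
      Nat.factorial_succ (2 * k + 1), Nat.factorial_succ (2 * k), Nat.factorial_two]
    push_cast
    field_simp
    ring

theorem isDF_detDF (B : E n →ₗ[ℝ] E n →ₗ[ℝ] ℝ) (m : ℕ) : IsDF (detDF B m) :=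
  ⟨fun y => ⟨Matrix.detRowAlternating.compLinearMap (LinearMap.pi fun j => B.flip (y j)),
    fun _ => rfl⟩,
   fun x => ⟨Matrix.detRowAlternating.compLinearMap (LinearMap.pi fun i => B (x i)),
    fun y => Matrix.det_transpose (Matrix.of fun i j => B (x i) (y j))⟩⟩

theorem IsAlt.eq_sum_basis {p : ℕ} {f : (Fin p → E n) → ℝ} (hf : IsAlt f)
    (b : OrthonormalBasis (Fin n) ℝ (E n)) (x : Fin p → E n) :
    f x = ∑ A : Fin p → Fin n, (∏ j, inner ℝ (b (A j)) (x j)) * f (fun j => b (A j)) := by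
  obtain ⟨F, hF⟩ := hf
  have hx : x = fun j => ∑ a, inner ℝ (b a) (x j) • b a :=
    funext fun j => (b.sum_repr' (x j)).symm
  calc f x = F.toMultilinearMap (fun j => ∑ a, inner ℝ (b a) (x j) • b a) := by
        rw [← hx]; exact (hF x).symm
    _ = _ := by
      rw [MultilinearMap.map_sum]
      refine Finset.sum_congr rfl fun A _ => ?_
      rw [MultilinearMap.map_smul_univ, smul_eq_mul]
      exact congrArg _ (hF _)

theorem IsDF.sum_orthonormalBasis_eq {p : ℕ} {ω : DF n p p} (hω : IsDF ω)
    (b b' : OrthonormalBasis (Fin n) ℝ (E n)) :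
    ∑ I : Fin p → Fin n, ω (fun j => b (I j)) (fun j => b (I j)) =
      ∑ I : Fin p → Fin n, ω (fun j => b' (I j)) (fun j => b' (I j)) := by
  have hexpand : ∀ x y : Fin p → E n, ω x y = ∑ A : Fin p → Fin n, ∑ A' : Fin p → Fin n,
      (∏ j, inner ℝ (b' (A j)) (x j) * inner ℝ (b' (A' j)) (y j)) *
        ω (fun j => b' (A j)) (fun j => b' (A' j)) := by
    intro x y
    rw [(hω.1 y).eq_sum_basis b' x]
    refine Finset.sum_congr rfl fun A _ => ?_
    rw [(hω.2 _).eq_sum_basis b' y, Finset.mul_sum]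
    refine Finset.sum_congr rfl fun A' _ => ?_
    rw [Finset.prod_mul_distrib]
    ring
  rw [Finset.sum_congr rfl fun I _ => hexpand _ _, Finset.sum_comm]
  refine Finset.sum_congr rfl fun A _ => ?_
  rw [Finset.sum_comm]
  simp only [← Finset.sum_mul, OrthonormalBasis.sum_prod_inner_mul_inner, ite_mul, one_mul,
    zero_mul, Finset.sum_ite_eq, Finset.mem_univ, if_true]

theorem detDF_comp_diagonal {B : E n →ₗ[ℝ] E n →ₗ[ℝ] ℝ} {b : Fin n → E n} {μ : Fin n → ℝ}
    (hdiag : ∀ i j, B (b i) (b j) = if i = j then μ i else 0) {m : ℕ}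
    (I : Fin m → Fin n) :
    detDF B m (fun j => b (I j)) (fun j => b (I j)) =
      if Function.Injective I then ∏ j, μ (I j) else 0 := by
  split_ifs with hI
  · have hdiagonal : Matrix.of (fun i j => B (b (I i)) (b (I j))) =
        Matrix.diagonal fun j => μ (I j) := by
      ext i j
      simp [hdiag, Matrix.diagonal_apply, hI.eq_iff]
    rw [detDF, hdiagonal, Matrix.det_diagonal]
  · obtain ⟨i, j, hij, hne⟩ := Function.not_injective_iff.mp hI
    exact Matrix.det_zero_of_row_eq hne (funext fun l => by simp [hij])

theorem sum_detDF_e_eq_factorial_mul_esymm {B : E n →ₗ[ℝ] E n →ₗ[ℝ] ℝ}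
    {b : OrthonormalBasis (Fin n) ℝ (E n)}
    {μ : Fin n → ℝ} (hdiag : ∀ i j, B (b i) (b j) = if i = j then μ i else 0) (m : ℕ) :
    ∑ I : Fin m → Fin n, detDF B m (fun j => e n (I j)) (fun j => e n (I j)) =
      m.factorial * esymm n m μ := by
  have he : e n = EuclideanSpace.basisFun (Fin n) ℝ :=
    funext fun i => (EuclideanSpace.basisFun_apply (Fin n) ℝ i).symm
  rw [he, (isDF_detDF B m).sum_orthonormalBasis_eq _ b]
  simp only [detDF_comp_diagonal hdiag, ← Finset.sum_filter]
  exact sum_filter_injective_prod m μ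

theorem scal_contr_cDF {m : ℕ} (h : m = m + 0) (ω : DF n m m) :
    scal (contr m 0 0 (cDF h h ω)) =
      ∑ I : Fin m → Fin n, ω (fun j => e n (I j)) (fun j => e n (I j)) := by
  simp [scal, contr, cDF]

end DF

/-- For a hypersurface of Euclidean space with second fundamental form `B`
and curvature `R` (Gauss equation `R = (1/2)B²`): `B^{2k} = 2^k R^k`, and the even symmetric
functions of the principal curvatures are intrinsic: `s_{2k} = (2^k/((2k)!)²) c^{2k}(R^k)`. -/
theorem DF.hypersurface_even_esymm_intrinsic {n k : ℕ}
    (B : E n →ₗ[ℝ] E n →ₗ[ℝ] ℝ)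
    (e : OrthonormalBasis (Fin n) ℝ (E n)) (μ : Fin n → ℝ)
    (hdiag : ∀ i j, B (e i) (e j) = if i = j then μ i else 0)
    (R : DF n 2 2) (hGauss : R = (1 / 2 : ℝ) • DF.pow1 (DF.ofBilin B) 2) :
    DF.pow1 (DF.ofBilin B) (2 * k) = (2 ^ k : ℝ) • DF.pow2 R k ∧
    DF.esymm n (2 * k) μ =
      (2 ^ k : ℝ) / (((2 * k).factorial : ℝ)) ^ 2 *
        DF.scal (DF.contr (2 * k) 0 0
          (DF.cDF (by omega) (by omega) (DF.pow2 R k) : DF n (2 * k + 0) (2 * k + 0))) := by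
  have hR : R = detDF B 2 := by
    rw [hGauss, pow1_ofBilin, smul_smul]
    norm_num
  refine ⟨?_, ?_⟩
  · rw [pow1_ofBilin, hR, pow2_detDF, smul_smul]
    congr 1
    field_simp
  · rw [scal_contr_cDF, hR, pow2_detDF]
    simp only [Pi.smul_apply, smul_eq_mul, ← Finset.mul_sum,
      sum_detDF_e_eq_factorial_mul_esymm hdiag]
    field_simp
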